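/- Let ρ be a d×d density matrix, U a d×d unitary matrix, α ∈ ℝ^d with α₁ ≥ α₂ ≥ … ≥ α_d ≥ 0, 1 ≤ k ≤ d, and let Π be the diagonal projection onto the first k standard basis vectors. Then ‖U diag(α₁,…,α_k,0,…,0) Uᴴ − ρ‖₁ ≤ √(2k) · (Σ_{i=k+1}^d α_i) + √(2k) · ‖diag(α) − Uᴴ ρ U‖₂ + 1 − tr(Π Uᴴ ρ U). -/

import Mathlib

open Matrix
open scoped ComplexOrder

/-- The singular values of a complex square matrix `M`: the square roots of the
eigenvalues of `Mᴴ * M` (in the order provided by the spectral theorem). -/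
noncomputable def singularValues {d : ℕ} (M : Matrix (Fin d) (Fin d) ℂ) : Fin d → ℝ :=
  fun i => Real.sqrt ((Matrix.isHermitian_conjTranspose_mul_self M).eigenvalues i)

/-- The Schatten `p`-norm of a complex square matrix, `(∑ i, sᵢ(M)^p)^(1/p)`. -/
noncomputable def schattenNorm {d : ℕ} (p : ℝ) (M : Matrix (Fin d) (Fin d) ℂ) : ℝ :=
  (∑ i, singularValues M i ^ p) ^ (1 / p)

/-!
Conjugating by `U` reduces the claim to `σ = Uᴴ ρ U`. With `P` the projection onto the first
`k` coordinates, `Q = 1 - P`, `D = diag α` and `X = D - σ`, the truncated diagonal is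
`P D = D - Q D Q`, so `P D - σ = (X - Q X Q) - Q σ Q`. The first term equals `P X + Q X P`,
hence has rank at most `2k`, and it is `X` with the block `Q X Q` erased, so its Frobenius norm
is at most `‖X‖₂`; Cauchy–Schwarz on its eigenvalues gives `‖X - Q X Q‖₁ ≤ √(2k) ‖X‖₂`.
The second term is positive semidefinite, so its trace norm is `tr (Q σ) = 1 - tr (P σ)`.
The trace norm triangle inequality for Hermitian matrices comes from the duality
`‖H‖₁ = max_{S unitary} Re tr (H S)`.
-/

namespace Matrix.IsHermitian

variable {𝕜 : Type*} [RCLike 𝕜] {n : Type*} [Fintype n] [DecidableEq n] {A : Matrix n n 𝕜}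

open Polynomial in
lemma sum_eigenvalues_eq_of_charpoly_eq (hA : A.IsHermitian) {μ : n → ℝ}
    (h : A.charpoly = ∏ i, (X - C (μ i : 𝕜))) (f : ℝ → ℝ) :
    ∑ i, f (hA.eigenvalues i) = ∑ i, f (μ i) := by
  have hroots : Finset.univ.val.map (RCLike.ofReal ∘ hA.eigenvalues : n → 𝕜)
      = Finset.univ.val.map (RCLike.ofReal ∘ μ) := by
    rw [← hA.roots_charpoly_eq_eigenvalues, h,
      roots_prod _ _ (Finset.prod_ne_zero_iff.2 fun i _ => X_sub_C_ne_zero _)]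
    simp [roots_X_sub_C]
  have := congrArg (fun m => (m.map (f ∘ RCLike.re)).sum) hroots
  simpa only [Multiset.map_map, Function.comp_def, RCLike.ofReal_re,
    ← Finset.sum_eq_multiset_sum] using this

lemma re_trace_mul_le_of_mem_unitaryGroup (hA : A.IsHermitian) {C : Matrix n n 𝕜}
    (hC : C ∈ unitaryGroup n 𝕜) : RCLike.re (A * C).trace ≤ ∑ i, |hA.eigenvalues i| := by
  set W : Matrix n n 𝕜 := (hA.eigenvectorUnitary : Matrix n n 𝕜)
  have hW : W ∈ unitaryGroup n 𝕜 := hA.eigenvectorUnitary.2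
  have hG : star W * C * W ∈ unitaryGroup n 𝕜 := mul_mem (mul_mem (Unitary.star_mem hW) hC) hW
  have htr : (A * C).trace = ∑ i, (hA.eigenvalues i : 𝕜) * (star W * C * W) i i := by
    conv_lhs => rw [hA.spectral_theorem, Unitary.conjStarAlgAut_apply]
    rw [show W * diagonal (RCLike.ofReal ∘ hA.eigenvalues) * star W * C
        = W * (diagonal (RCLike.ofReal ∘ hA.eigenvalues) * (star W * C)) by noncomm_ring,
      trace_mul_comm, mul_assoc]
    simp [trace, diagonal_mul]
  rw [htr, map_sum]
  refine Finset.sum_le_sum fun i _ => ?_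
  calc RCLike.re ((hA.eigenvalues i : 𝕜) * (star W * C * W) i i)
      ≤ ‖(hA.eigenvalues i : 𝕜) * (star W * C * W) i i‖ := RCLike.re_le_norm _
    _ ≤ |hA.eigenvalues i| := by
      rw [norm_mul, RCLike.norm_ofReal]
      exact mul_le_of_le_one_right (abs_nonneg _) (entry_norm_bound_of_unitary hG i i)

lemma exists_mem_unitaryGroup_re_trace_mul_eq (hA : A.IsHermitian) :
    ∃ S ∈ unitaryGroup n 𝕜, RCLike.re (A * S).trace = ∑ i, |hA.eigenvalues i| := by
  set W : Matrix n n 𝕜 := (hA.eigenvectorUnitary : Matrix n n 𝕜)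
  have hW : W ∈ unitaryGroup n 𝕜 := hA.eigenvectorUnitary.2
  have hWW : star W * W = 1 := mem_unitaryGroup_iff'.1 hW
  set sign : n → 𝕜 := fun i => if 0 ≤ hA.eigenvalues i then 1 else -1
  have hsign : diagonal sign ∈ unitaryGroup n 𝕜 := by
    rw [mem_unitaryGroup_iff, star_eq_conjTranspose, diagonal_conjTranspose,
      diagonal_mul_diagonal, ← diagonal_one]
    congr 1 with i
    by_cases h : 0 ≤ hA.eigenvalues i <;> simp [sign, h]
  refine ⟨W * diagonal sign * star W, mul_mem (mul_mem hW hsign) (Unitary.star_mem hW), ?_⟩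
  conv_lhs => rw [hA.spectral_theorem, Unitary.conjStarAlgAut_apply]
  rw [show W * diagonal (RCLike.ofReal ∘ hA.eigenvalues) * star W * (W * diagonal sign * star W)
      = W * (diagonal (RCLike.ofReal ∘ hA.eigenvalues) * diagonal sign * star W) by
        simp only [mul_assoc, ← mul_assoc (star W) W, hWW, one_mul],
    trace_mul_comm, mul_assoc _ (star W), hWW, mul_one, diagonal_mul_diagonal,
    trace_diagonal, map_sum]
  refine Finset.sum_congr rfl fun i _ => ?_
  by_cases h : 0 ≤ hA.eigenvalues i
  · simp [sign, h, abs_of_nonneg h]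
  · simp [sign, h, abs_of_neg (not_le.1 h)]

end Matrix.IsHermitian

namespace Matrix

lemma rank_add_le {K n : Type*} [Field K] [Fintype n] (A B : Matrix n n K) :
    (A + B).rank ≤ A.rank + B.rank := by
  unfold rank
  rw [mulVecLin_add]
  calc Module.finrank K (LinearMap.range (A.mulVecLin + B.mulVecLin))
      ≤ Module.finrank K ↥(LinearMap.range A.mulVecLin ⊔ LinearMap.range B.mulVecLin) := by
        refine Submodule.finrank_mono ?_
        rintro x ⟨y, rfl⟩
        exact Submodule.mem_sup.2 ⟨A.mulVecLin y, ⟨y, rfl⟩, B.mulVecLin y, ⟨y, rfl⟩, rfl⟩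
    _ ≤ _ := Submodule.finrank_add_le_finrank_add_finrank _ _

lemma rank_sub_compression_le {K n : Type*} [Field K] [Fintype n] [DecidableEq n]
    (P X : Matrix n n K) : (X - (1 - P) * X * (1 - P)).rank ≤ 2 * P.rank := by
  rw [show X - (1 - P) * X * (1 - P) = P * X + (1 - P) * X * P by noncomm_ring, two_mul]
  exact (rank_add_le _ _).trans (add_le_add (rank_mul_le_left _ _) (rank_mul_le_right _ _))

section CoordProjection

variable {R n : Type*} [DecidableEq n] (p : n → Prop) [DecidablePred p]

def coordProjection [Zero R] [One R] : Matrix n n R :=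
  diagonal fun i => if p i then 1 else 0

lemma one_sub_coordProjection [Ring R] :
    1 - coordProjection p = (coordProjection (fun i => ¬p i) : Matrix n n R) := by
  rw [coordProjection, coordProjection, ← diagonal_one, diagonal_sub]
  congr 1 with i
  by_cases h : p i <;> simp [h]

lemma isHermitian_coordProjection [Semiring R] [StarRing R] :
    (coordProjection p : Matrix n n R).IsHermitian := by
  rw [IsHermitian, coordProjection, diagonal_conjTranspose]
  congr 1 with i
  by_cases h : p i <;> simp [h]

lemma isIdempotentElem_coordProjection [Fintype n] [Semiring R] :
    IsIdempotentElem (coordProjection p : Matrix n n R) := by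
  rw [IsIdempotentElem, coordProjection, diagonal_mul_diagonal]
  congr 1 with i
  by_cases h : p i <;> simp [h]

lemma coordProjection_mul_mul_coordProjection_apply [Fintype n] [Semiring R]
    (X : Matrix n n R) (i j : n) :
    (coordProjection p * X * coordProjection p : Matrix n n R) i j
      = if p i ∧ p j then X i j else 0 := by
  by_cases hi : p i <;> by_cases hj : p j <;> simp [coordProjection, hi, hj]

lemma diagonal_sub_compression [Fintype n] [Ring R] (v : n → R) :
    diagonal v - (1 - coordProjection p) * diagonal v * (1 - coordProjection p)
      = diagonal fun i => if p i then v i else 0 := by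
  rw [one_sub_coordProjection, coordProjection, diagonal_mul_diagonal, diagonal_mul_diagonal,
    diagonal_sub]
  congr 1 with i
  by_cases h : p i <;> simp [h]

lemma rank_coordProjection [Fintype n] [Field R] :
    (coordProjection p : Matrix n n R).rank = Fintype.card {i // p i} := by
  classical
  rw [coordProjection, rank_diagonal]
  exact Fintype.card_congr (Equiv.subtypeEquivRight fun i => by by_cases h : p i <;> simp [h])

end CoordProjection

end Matrix

section SchattenNorm

variable {d : ℕ} {A B : Matrix (Fin d) (Fin d) ℂ}

lemma schattenNorm_nonneg (p : ℝ) (M : Matrix (Fin d) (Fin d) ℂ) : 0 ≤ schattenNorm p M :=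
  Real.rpow_nonneg (Finset.sum_nonneg fun _ _ => Real.rpow_nonneg (Real.sqrt_nonneg _) _) _

lemma schattenNorm_eq_of_charpoly_conjTranspose_mul_self_eq (p : ℝ)
    (h : (Aᴴ * A).charpoly = (Bᴴ * B).charpoly) : schattenNorm p A = schattenNorm p B := by
  unfold schattenNorm singularValues
  rw [(IsHermitian.eigenvalues_eq_eigenvalues_iff _ _).2 h]

lemma schattenNorm_neg (p : ℝ) (M : Matrix (Fin d) (Fin d) ℂ) :
    schattenNorm p (-M) = schattenNorm p M :=
  schattenNorm_eq_of_charpoly_conjTranspose_mul_self_eq p (by simp)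

lemma schattenNorm_unitary_conj (p : ℝ) (M : Matrix (Fin d) (Fin d) ℂ)
    {U : Matrix (Fin d) (Fin d) ℂ} (hU : U ∈ unitaryGroup (Fin d) ℂ) :
    schattenNorm p (U * M * Uᴴ) = schattenNorm p M := by
  refine schattenNorm_eq_of_charpoly_conjTranspose_mul_self_eq p ?_
  have hUU : Uᴴ * U = 1 := mem_unitaryGroup_iff'.1 hU
  rw [show (U * M * Uᴴ)ᴴ * (U * M * Uᴴ) = U * (Mᴴ * M * Uᴴ) by
      simp only [conjTranspose_mul, conjTranspose_conjTranspose, mul_assoc,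
        ← mul_assoc Uᴴ U, hUU, one_mul],
    charpoly_mul_comm, mul_assoc, hUU, mul_one]

lemma schattenNorm_two_eq_sqrt_sum_norm_sq (M : Matrix (Fin d) (Fin d) ℂ) :
    schattenNorm 2 M = √(∑ i, ∑ j, ‖M i j‖ ^ 2) := by
  have hH := isHermitian_conjTranspose_mul_self M
  have hsum : ∑ i, hH.eigenvalues i = ∑ i, ∑ j, ‖M i j‖ ^ 2 := by
    have h := congrArg Complex.re hH.trace_eq_sum_eigenvalues
    simp only [trace, diag, mul_apply, conjTranspose_apply, Complex.re_sum, RCLike.star_def,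
      Complex.conj_mul', ← Complex.ofReal_pow, Complex.ofReal_re] at h
    rw [Finset.sum_comm, h]
    rfl
  unfold schattenNorm singularValues
  rw [Real.sqrt_eq_rpow, ← hsum]
  congr 1
  refine Finset.sum_congr rfl fun i _ => ?_
  rw [Real.rpow_two, Real.sq_sqrt (eigenvalues_conjTranspose_mul_self_nonneg M i)]

lemma Matrix.IsHermitian.schattenNorm_eq (hA : A.IsHermitian) (p : ℝ) :
    schattenNorm p A = (∑ i, |hA.eigenvalues i| ^ p) ^ (1 / p) := by
  have hsq : (Aᴴ * A).charpoly
      = ∏ i, (Polynomial.X - Polynomial.C ((hA.eigenvalues i ^ 2 : ℝ) : ℂ)) := by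
    rw [hA.eq, ← sq, ← cfc_pow_id (R := ℝ) A 2 hA.isSelfAdjoint, hA.charpoly_cfc_eq]
    rfl
  unfold schattenNorm singularValues
  rw [IsHermitian.sum_eigenvalues_eq_of_charpoly_eq _ hsq (fun x => √x ^ p)]
  congr! 3 with i
  exact Real.sqrt_sq_eq_abs _

lemma Matrix.IsHermitian.schattenNorm_one_eq (hA : A.IsHermitian) :
    schattenNorm 1 A = ∑ i, |hA.eigenvalues i| := by
  simp [hA.schattenNorm_eq]

lemma Matrix.IsHermitian.schattenNorm_two_eq (hA : A.IsHermitian) :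
    schattenNorm 2 A = √(∑ i, hA.eigenvalues i ^ 2) := by
  simp only [hA.schattenNorm_eq, Real.rpow_two, sq_abs, Real.sqrt_eq_rpow, one_div]

lemma Matrix.IsHermitian.schattenNorm_one_add_le (hA : A.IsHermitian) (hB : B.IsHermitian) :
    schattenNorm 1 (A + B) ≤ schattenNorm 1 A + schattenNorm 1 B := by
  obtain ⟨S, hS, hAB⟩ := (hA.add hB).exists_mem_unitaryGroup_re_trace_mul_eq
  rw [(hA.add hB).schattenNorm_one_eq, hA.schattenNorm_one_eq, hB.schattenNorm_one_eq, ← hAB,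
    add_mul, trace_add, map_add]
  exact add_le_add (hA.re_trace_mul_le_of_mem_unitaryGroup hS)
    (hB.re_trace_mul_le_of_mem_unitaryGroup hS)

lemma Matrix.IsHermitian.schattenNorm_one_sub_le (hA : A.IsHermitian) (hB : B.IsHermitian) :
    schattenNorm 1 (A - B) ≤ schattenNorm 1 A + schattenNorm 1 B := by
  simpa only [sub_eq_add_neg, schattenNorm_neg] using hA.schattenNorm_one_add_le hB.neg

lemma Matrix.PosSemidef.schattenNorm_one_eq_re_trace (hA : A.PosSemidef) :
    schattenNorm 1 A = A.trace.re := by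
  rw [hA.isHermitian.schattenNorm_one_eq, hA.isHermitian.trace_eq_sum_eigenvalues,
    Complex.re_sum]
  exact Finset.sum_congr rfl fun i _ => by simp [abs_of_nonneg (hA.eigenvalues_nonneg i)]

lemma Matrix.IsHermitian.schattenNorm_one_le_sqrt_rank_mul (hA : A.IsHermitian) :
    schattenNorm 1 A ≤ √A.rank * schattenNorm 2 A := by
  classical
  set support := Finset.univ.filter fun i => hA.eigenvalues i ≠ 0
  have hrank : support.card = A.rank := by
    rw [hA.rank_eq_card_non_zero_eigs, Fintype.card_subtype]
  have hsupport : ∑ i, |hA.eigenvalues i| = ∑ i ∈ support, |hA.eigenvalues i| :=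
    (Finset.sum_filter_of_ne (f := fun i => |hA.eigenvalues i|)
      fun i _ h => abs_ne_zero.1 h).symm
  rw [hA.schattenNorm_one_eq, hA.schattenNorm_two_eq, ← Real.sqrt_mul (Nat.cast_nonneg _),
    Real.le_sqrt (Finset.sum_nonneg fun i _ => abs_nonneg _) (by positivity), hsupport, ← hrank]
  calc (∑ i ∈ support, |hA.eigenvalues i|) ^ 2
      ≤ support.card * ∑ i ∈ support, |hA.eigenvalues i| ^ 2 := sq_sum_le_card_mul_sum_sq
    _ ≤ support.card * ∑ i, hA.eigenvalues i ^ 2 := by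
      simp only [sq_abs]
      gcongr
      exact Finset.subset_univ _

end SchattenNorm

section Compression

variable {d : ℕ} (p : Fin d → Prop) [DecidablePred p]

lemma isHermitian_one_sub_coordProjection :
    (1 - coordProjection p : Matrix (Fin d) (Fin d) ℂ).IsHermitian := by
  simpa only [one_sub_coordProjection] using isHermitian_coordProjection _

lemma Matrix.IsHermitian.sub_compression {X : Matrix (Fin d) (Fin d) ℂ} (hX : X.IsHermitian) :
    (X - (1 - coordProjection p) * X * (1 - coordProjection p)).IsHermitian := by
  have hQXQ := isHermitian_conjTranspose_mul_mul (1 - coordProjection p) hX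
  rw [(isHermitian_one_sub_coordProjection p).eq] at hQXQ
  exact hX.sub hQXQ

lemma Matrix.PosSemidef.compression {σ : Matrix (Fin d) (Fin d) ℂ} (hσ : σ.PosSemidef) :
    ((1 - coordProjection p) * σ * (1 - coordProjection p)).PosSemidef := by
  have h := hσ.conjTranspose_mul_mul_same (1 - coordProjection p)
  rwa [(isHermitian_one_sub_coordProjection p).eq] at h

lemma Matrix.PosSemidef.schattenNorm_one_compression_eq {σ : Matrix (Fin d) (Fin d) ℂ}
    (hσ : σ.PosSemidef) :
    schattenNorm 1 ((1 - coordProjection p) * σ * (1 - coordProjection p))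
      = σ.trace.re - (coordProjection p * σ).trace.re := by
  rw [(hσ.compression p).schattenNorm_one_eq_re_trace, trace_mul_comm, ← mul_assoc,
    (isIdempotentElem_coordProjection p).one_sub.eq, sub_mul, one_mul, trace_sub, Complex.sub_re]

lemma schattenNorm_two_sub_compression_le (X : Matrix (Fin d) (Fin d) ℂ) :
    schattenNorm 2 (X - (1 - coordProjection p) * X * (1 - coordProjection p))
      ≤ schattenNorm 2 X := by
  rw [schattenNorm_two_eq_sqrt_sum_norm_sq, schattenNorm_two_eq_sqrt_sum_norm_sq,
    one_sub_coordProjection]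
  gcongr with i _ j
  rw [Matrix.sub_apply, coordProjection_mul_mul_coordProjection_apply]
  split_ifs <;> simp

lemma Matrix.IsHermitian.schattenNorm_one_sub_compression_le {X : Matrix (Fin d) (Fin d) ℂ}
    (hX : X.IsHermitian) :
    schattenNorm 1 (X - (1 - coordProjection p) * X * (1 - coordProjection p))
      ≤ √(2 * Fintype.card {i // p i}) * schattenNorm 2 X := by
  set Q : Matrix (Fin d) (Fin d) ℂ := 1 - coordProjection p
  have hrank : ((X - Q * X * Q).rank : ℝ) ≤ 2 * Fintype.card {i // p i} := by
    rw [← rank_coordProjection p (R := ℂ)]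
    exact_mod_cast rank_sub_compression_le _ _
  calc schattenNorm 1 (X - Q * X * Q)
      ≤ √(X - Q * X * Q).rank * schattenNorm 2 (X - Q * X * Q) :=
        (hX.sub_compression p).schattenNorm_one_le_sqrt_rank_mul
    _ ≤ √(2 * Fintype.card {i // p i}) * schattenNorm 2 X := by
        gcongr
        · exact schattenNorm_nonneg _ _
        · exact schattenNorm_two_sub_compression_le p X

end Compression

lemma Matrix.PosSemidef.schattenNorm_one_truncation_sub_le {d : ℕ} {σ : Matrix (Fin d) (Fin d) ℂ}
    (hσ : σ.PosSemidef) (p : Fin d → Prop) [DecidablePred p] (v : Fin d → ℝ) :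
    schattenNorm 1 (diagonal (fun i => if p i then (v i : ℂ) else 0) - σ)
      ≤ √(2 * Fintype.card {i // p i}) * schattenNorm 2 (diagonal (fun i => (v i : ℂ)) - σ)
        + (σ.trace.re - (coordProjection p * σ).trace.re) := by
  set P : Matrix (Fin d) (Fin d) ℂ := coordProjection p
  set X := diagonal (fun i => (v i : ℂ)) - σ
  have hX : X.IsHermitian :=
    (isHermitian_diagonal_of_self_adjoint _ (funext fun i => Complex.conj_ofReal _)).sub hσ.1
  have hsplit : diagonal (fun i => if p i then (v i : ℂ) else 0) - σ
      = (X - (1 - P) * X * (1 - P)) - (1 - P) * σ * (1 - P) := by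
    rw [← diagonal_sub_compression]
    simp only [X, P]
    noncomm_ring
  rw [hsplit, ← hσ.schattenNorm_one_compression_eq p]
  exact ((hX.sub_compression p).schattenNorm_one_sub_le (hσ.compression p).1).trans
    (add_le_add_left (hX.schattenNorm_one_sub_compression_le p) _)

theorem truncation_trace_norm_bound'_general (d k : ℕ)
    (ρ : Matrix (Fin d) (Fin d) ℂ) (hρ : ρ.PosSemidef) (hρtr : ρ.trace = 1)
    (U : Matrix (Fin d) (Fin d) ℂ) (hU : U ∈ Matrix.unitaryGroup (Fin d) ℂ)
    (α : Fin d → ℝ) (hαnn : ∀ i, 0 ≤ α i)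
    (Pk : Matrix (Fin d) (Fin d) ℂ)
    (hPk : Pk = Matrix.diagonal (fun i : Fin d => if (i : ℕ) < k then (1 : ℂ) else 0)) :
    schattenNorm 1
        (U * Matrix.diagonal (fun i : Fin d => if (i : ℕ) < k then (α i : ℂ) else 0) * Uᴴ - ρ)
      ≤ Real.sqrt (2 * k) * (∑ i ∈ Finset.univ.filter (fun i : Fin d => k ≤ (i : ℕ)), α i)
        + Real.sqrt (2 * k) * schattenNorm 2 (Matrix.diagonal (fun i => (α i : ℂ)) - Uᴴ * ρ * U)
        + 1 - (Pk * (Uᴴ * ρ * U)).trace.re := by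
  let p : Fin d → Prop := fun i => (i : ℕ) < k
  obtain rfl : Pk = coordProjection p := hPk
  set σ := Uᴴ * ρ * U
  have hUU : U * Uᴴ = 1 := mem_unitaryGroup_iff.1 hU
  have hσtr : σ.trace = 1 := by rw [trace_mul_cycle, hUU, one_mul, hρtr]
  have hρσ : ρ = U * σ * Uᴴ := by
    simp only [σ, ← mul_assoc, hUU, one_mul]
    rw [mul_assoc, hUU, mul_one]
  have hcard : √(2 * Fintype.card {i // p i}) ≤ √(2 * k) := by
    rw [Fintype.card_subtype, Fin.card_filter_val_lt]
    gcongr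
    exact_mod_cast min_le_right _ _
  have htail : 0 ≤ √(2 * k) * ∑ i ∈ Finset.univ.filter (fun i : Fin d => k ≤ (i : ℕ)), α i :=
    mul_nonneg (Real.sqrt_nonneg _) (Finset.sum_nonneg fun i _ => hαnn i)
  rw [hρσ, ← sub_mul, ← mul_sub, schattenNorm_unitary_conj 1 _ hU]
  calc _ ≤ √(2 * Fintype.card {i // p i}) * schattenNorm 2 (diagonal (fun i => (α i : ℂ)) - σ)
          + (σ.trace.re - (coordProjection p * σ).trace.re) :=
        (hρ.conjTranspose_mul_mul_same U).schattenNorm_one_truncation_sub_le p α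
    _ ≤ _ := by
        rw [hσtr, Complex.one_re]
        nlinarith [schattenNorm_nonneg 2 (diagonal (fun i => (α i : ℂ)) - σ)]

/-- For a density matrix `ρ`, a unitary `U`, non-increasing non-negative `α`, and `Π` the
diagonal projection onto the first `k` standard basis vectors,
`‖U diag(α₀,…,α_{k-1},0,…,0) Uᴴ - ρ‖₁
  ≤ √(2k) (∑_{i ≥ k} αᵢ) + √(2k) ‖diag(α) - Uᴴ ρ U‖₂ + 1 - tr(Π Uᴴ ρ U)`. -/
theorem truncation_trace_norm_bound' (d k : ℕ) (hk1 : 1 ≤ k) (hkd : k ≤ d)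
    (ρ : Matrix (Fin d) (Fin d) ℂ) (hρ : ρ.PosSemidef) (hρtr : ρ.trace = 1)
    (U : Matrix (Fin d) (Fin d) ℂ) (hU : U ∈ Matrix.unitaryGroup (Fin d) ℂ)
    (α : Fin d → ℝ) (hα : Antitone α) (hαnn : ∀ i, 0 ≤ α i)
    (Pk : Matrix (Fin d) (Fin d) ℂ)
    (hPk : Pk = Matrix.diagonal (fun i : Fin d => if (i : ℕ) < k then (1 : ℂ) else 0)) :
    schattenNorm 1
        (U * Matrix.diagonal (fun i : Fin d => if (i : ℕ) < k then (α i : ℂ) else 0) * Uᴴ - ρ)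
      ≤ Real.sqrt (2 * k) * (∑ i ∈ Finset.univ.filter (fun i : Fin d => k ≤ (i : ℕ)), α i)
        + Real.sqrt (2 * k) * schattenNorm 2 (Matrix.diagonal (fun i => (α i : ℂ)) - Uᴴ * ρ * U)
        + 1 - (Pk * (Uᴴ * ρ * U)).trace.re :=
  truncation_trace_norm_bound'_general d k ρ hρ hρtr U hU α hαnn Pk hPk
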